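/- Let I = I_{α_1} ∩ ⋯ ∩ I_{α_s} be the minimal primary decomposition of a squarefree monomial ideal I ⊆ S, i.e. the α_i ∈ {0,1}^n are nonzero and the supports supp₊(α_1), …, supp₊(α_s) are pairwise incomparable under inclusion. Then (I^{[q]} :_S I) = (I_{α_1}^{[q]} + ((x^{α_1})^{q-1})) ∩ ⋯ ∩ (I_{α_s}^{[q]} + ((x^{α_s})^{q-1})). -/

import Mathlib

open MvPowerSeries

/-- The `q`-th Frobenius power `J^{[q]}` of an ideal `J`: the ideal generated by
the `q`-th powers of the elements of `J`. -/
noncomputable def frobeniusPower {R : Type*} [CommRing R] (J : Ideal R) (q : ℕ) : Ideal R :=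
  Ideal.span ((fun f => f ^ q) '' (J : Set R))

/-- The face ideal `I_α` associated to a set of indices `A = supp₊(α)`:
the ideal generated by the variables `x_i`, `i ∈ A`. -/
noncomputable def faceIdeal {n : ℕ} (K : Type*) [Field K] (A : Finset (Fin n)) :
    Ideal (MvPowerSeries (Fin n) K) :=
  Ideal.span ((fun i => (X i : MvPowerSeries (Fin n) K)) '' (A : Set (Fin n)))

section Aux

variable {K : Type*} [Field K] {n : ℕ}

noncomputable def mono (K : Type*) [Field K] {n : ℕ} (m : Fin n →₀ ℕ) :
    MvPowerSeries (Fin n) K := monomial m 1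

theorem span_le_prop (Q : (Fin n →₀ ℕ) → Prop) (hQ : ∀ b b', b ≤ b' → Q b → Q b')
    (S : Set (MvPowerSeries (Fin n) K))
    (hS : ∀ f ∈ S, ∀ b, coeff b f ≠ 0 → Q b) :
    ∀ f ∈ Ideal.span S, ∀ b, coeff b f ≠ 0 → Q b := by
  classical
  let P : Ideal (MvPowerSeries (Fin n) K) :=
    { carrier := {f | ∀ b, coeff b f ≠ 0 → Q b}
      add_mem' := by
        intro a b ha hb c hc
        rw [map_add] at hc
        by_cases h : coeff c a ≠ 0
        · exact ha c h
        · push_neg at h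
          exact hb c (by simpa [h] using hc)
      zero_mem' := by intro b hb; simp at hb
      smul_mem' := by
        intro g f hf b hb
        rw [smul_eq_mul, coeff_mul] at hb
        obtain ⟨p, hp, hne⟩ := Finset.exists_ne_zero_of_sum_ne_zero hb
        have h2 : coeff p.2 f ≠ 0 := right_ne_zero_of_mul hne
        have hle : p.2 ≤ b := by
          rw [Finset.HasAntidiagonal.mem_antidiagonal] at hp
          exact hp ▸ le_add_self
        exact hQ _ _ hle (hf _ h2) }
  intro f hf
  exact (Ideal.span_le.mpr hS : Ideal.span S ≤ P) hf

theorem mem_span_monomials {M : Set (Fin n →₀ ℕ)} (hM : M.Finite)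
    (f : MvPowerSeries (Fin n) K) :
    f ∈ Ideal.span (mono K '' M) ↔ ∀ b, coeff b f ≠ 0 → ∃ m ∈ M, m ≤ b := by
  classical
  constructor
  · intro hf
    refine span_le_prop (fun b => ∃ m ∈ M, m ≤ b) ?_ _ ?_ f hf
    · rintro b b' hbb' ⟨m, hm, hmb⟩; exact ⟨m, hm, hmb.trans hbb'⟩
    · rintro g ⟨m, hm, rfl⟩ b hb
      have : b = m := eq_of_coeff_monomial_ne_zero hb
      exact ⟨m, hm, this.ge⟩
  · intro hf
    set F := hM.toFinset with hF
    let c : (Fin n →₀ ℕ) → (Fin n →₀ ℕ) := fun b =>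
      if h : ∃ m ∈ M, m ≤ b then h.choose else 0
    have hc1 : ∀ b (h : ∃ m ∈ M, m ≤ b), c b ∈ M ∧ c b ≤ b := by
      intro b h
      simp only [c, dif_pos h]
      exact ⟨h.choose_spec.1, h.choose_spec.2⟩
    let g : (Fin n →₀ ℕ) → MvPowerSeries (Fin n) K := fun m b' =>
      if (∃ m' ∈ M, m' ≤ m + b') ∧ c (m + b') = m then coeff (m + b') f else 0
    have hcoeff : ∀ m b', coeff b' (g m) =
        if (∃ m' ∈ M, m' ≤ m + b') ∧ c (m + b') = m then coeff (m + b') f else 0 :=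
      fun m b' => rfl
    have key : f = ∑ m ∈ F, mono K m * g m := by
      ext b
      rw [map_sum]
      have hterm : ∀ m ∈ F, coeff b (mono K m * g m) =
          if m ≤ b ∧ (∃ m' ∈ M, m' ≤ b) ∧ c b = m then coeff b f else 0 := by
        intro m _
        rw [mono, coeff_monomial_mul]
        by_cases hmb : m ≤ b
        · rw [if_pos hmb, one_mul, hcoeff, add_tsub_cancel_of_le hmb]
          by_cases h2 : (∃ m' ∈ M, m' ≤ b) ∧ c b = m
          · rw [if_pos h2, if_pos ⟨hmb, h2⟩]
          · rw [if_neg h2, if_neg fun h => h2 ⟨h.2.1, h.2.2⟩]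
        · rw [if_neg hmb, if_neg fun h => hmb h.1]
      rw [Finset.sum_congr rfl hterm]
      by_cases hb : ∃ m' ∈ M, m' ≤ b
      · obtain ⟨hcM, hcb⟩ := hc1 b hb
        rw [Finset.sum_eq_single (c b)]
        · rw [if_pos ⟨hcb, hb, rfl⟩]
        · intro m _ hne
          exact if_neg fun h => hne h.2.2.symm
        · intro hnot
          exact absurd (hM.mem_toFinset.mpr hcM) hnot
      · rw [Finset.sum_eq_zero fun m _ => if_neg fun h => hb h.2.1]
        by_contra h
        exact hb (hf b h)
    rw [key]
    refine Ideal.sum_mem _ fun m hm => ?_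
    exact Ideal.mul_mem_right _ _ (Ideal.subset_span ⟨m, hM.mem_toFinset.mp hm, rfl⟩)

theorem sum_single_apply (σ : Finset (Fin n)) (k : Fin n → ℕ) (j : Fin n) :
    (σ.sum fun i => Finsupp.single i (k i)) j = if j ∈ σ then k j else 0 := by
  classical
  rw [Finsupp.finset_sum_apply]
  simp only [Finsupp.single_apply]
  exact Finset.sum_ite_eq' σ j k

theorem sum_single_le_iff (σ : Finset (Fin n)) (k : Fin n → ℕ) (b : Fin n →₀ ℕ) :
    (σ.sum fun i => Finsupp.single i (k i)) ≤ b ↔ ∀ j ∈ σ, k j ≤ b j := by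
  rw [Finsupp.le_def]
  constructor
  · intro h j hj
    have := h j
    rwa [sum_single_apply, if_pos hj] at this
  · intro h j
    rw [sum_single_apply]
    split
    · exact h j ‹_›
    · exact Nat.zero_le _

theorem prod_X_pow (σ : Finset (Fin n)) (k : ℕ) :
    (∏ j ∈ σ, (X j : MvPowerSeries (Fin n) K) ^ k)
      = mono K (σ.sum fun j => Finsupp.single j k) := by
  classical
  induction σ using Finset.induction_on with
  | empty => simp [mono, monomial_zero_one]
  | insert _ _ hj ih =>
      rw [Finset.prod_insert hj, ih, X_pow_eq, Finset.sum_insert hj, mono, mono,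
        monomial_mul_monomial, one_mul]

theorem charP_mv (p : ℕ) [Fact p.Prime] [CharP K p] :
    CharP (MvPowerSeries (Fin n) K) p :=
  charP_of_injective_ringHom (C (σ := Fin n) (R := K)).injective p

theorem frobeniusPower_span (p : ℕ) [Fact p.Prime] [CharP K p] (e : ℕ)
    (S : Set (MvPowerSeries (Fin n) K)) :
    frobeniusPower (Ideal.span S) (p ^ e) = Ideal.span ((fun f => f ^ p ^ e) '' S) := by
  haveI := charP_mv (K := K) (n := n) p
  have h1 : frobeniusPower (Ideal.span S) (p ^ e)
      = Ideal.map (iterateFrobenius (MvPowerSeries (Fin n) K) p e) (Ideal.span S) := rfl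
  rw [h1, Ideal.map_span]
  rfl

theorem mem_faceIdeal_iff (A : Finset (Fin n)) (f : MvPowerSeries (Fin n) K) :
    f ∈ faceIdeal K A ↔ ∀ b, coeff b f ≠ 0 → ∃ j ∈ A, 1 ≤ b j := by
  have h : (fun i => (X i : MvPowerSeries (Fin n) K)) '' (A : Set (Fin n))
      = mono K '' ((fun j => Finsupp.single j 1) '' (A : Set (Fin n))) := by
    rw [Set.image_image]
    exact Set.image_congr fun j _ => by rw [mono, ← X_pow_eq, pow_one]
  rw [faceIdeal, h, mem_span_monomials ((A.finite_toSet).image _)]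
  constructor
  · intro hf b hb
    obtain ⟨m, ⟨j, hj, rfl⟩, hle⟩ := hf b hb
    exact ⟨j, hj, Finsupp.single_le_iff.mp hle⟩
  · intro hf b hb
    obtain ⟨j, hj, h1⟩ := hf b hb
    exact ⟨_, ⟨j, hj, rfl⟩, Finsupp.single_le_iff.mpr h1⟩

theorem mem_I_iff {s : ℕ} (A : Fin s → Finset (Fin n)) (f : MvPowerSeries (Fin n) K) :
    f ∈ ⨅ i, faceIdeal K (A i) ↔
      ∀ b, coeff b f ≠ 0 → ∀ i, ∃ j ∈ A i, 1 ≤ b j := by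
  rw [Submodule.mem_iInf]
  simp only [mem_faceIdeal_iff]
  exact ⟨fun h b hb i => h i b hb, fun h i b hb => h b hb i⟩

/-- exponent vectors of transversal monomials with exponent `k` -/
def transSet {s : ℕ} (A : Fin s → Finset (Fin n)) (k : ℕ) : Set (Fin n →₀ ℕ) :=
  (fun σ : Finset (Fin n) => σ.sum fun j => Finsupp.single j k) ''
    {σ : Finset (Fin n) | ∀ i, ∃ j ∈ σ, j ∈ A i}

theorem mem_span_trans_iff {s : ℕ} (A : Fin s → Finset (Fin n)) (k : ℕ)
    (f : MvPowerSeries (Fin n) K) :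
    f ∈ Ideal.span (mono K '' transSet A k) ↔
      ∀ b, coeff b f ≠ 0 → ∀ i, ∃ j ∈ A i, k ≤ b j := by
  classical
  have hfin : (transSet A k).Finite := (Set.toFinite _).image _
  rw [mem_span_monomials hfin]
  constructor
  · intro h b hb i
    obtain ⟨m, ⟨σ, hσ, rfl⟩, hmb⟩ := h b hb
    obtain ⟨j, hjσ, hjA⟩ := hσ i
    exact ⟨j, hjA, (sum_single_le_iff σ _ b).mp hmb j hjσ⟩
  · intro h b hb
    refine ⟨_, ⟨Finset.univ.filter (fun j => k ≤ b j), fun i => ?_, rfl⟩, ?_⟩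
    · obtain ⟨j, hjA, hj⟩ := h b hb i
      exact ⟨j, Finset.mem_filter.mpr ⟨Finset.mem_univ j, hj⟩, hjA⟩
    · rw [sum_single_le_iff]
      intro j hj
      exact (Finset.mem_filter.mp hj).2

theorem iInf_faceIdeal_eq_span {s : ℕ} (A : Fin s → Finset (Fin n)) :
    (⨅ i, faceIdeal K (A i)) = Ideal.span (mono K '' transSet A 1) := by
  ext f
  rw [mem_I_iff, mem_span_trans_iff]

theorem mem_frobI_iff (p : ℕ) [Fact p.Prime] [CharP K p] (e : ℕ)
    {s : ℕ} (A : Fin s → Finset (Fin n)) (f : MvPowerSeries (Fin n) K) :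
    f ∈ frobeniusPower (⨅ i, faceIdeal K (A i)) (p ^ e) ↔
      ∀ b, coeff b f ≠ 0 → ∀ i, ∃ j ∈ A i, p ^ e ≤ b j := by
  have himg : (fun f => f ^ p ^ e) '' (mono K '' transSet A 1)
      = mono K '' transSet A (p ^ e) := by
    unfold transSet
    rw [Set.image_image, Set.image_image, Set.image_image]
    refine Set.image_congr fun σ _ => ?_
    rw [← prod_X_pow, ← prod_X_pow, ← Finset.prod_pow]
    simp [pow_one]
  rw [iInf_faceIdeal_eq_span, frobeniusPower_span, himg, mem_span_trans_iff]

theorem mem_rhs_iff (p : ℕ) [Fact p.Prime] [CharP K p] (e : ℕ) (A : Finset (Fin n))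
    (f : MvPowerSeries (Fin n) K) :
    f ∈ frobeniusPower (faceIdeal K A) (p ^ e) ⊔
        Ideal.span {(∏ x ∈ A, (X x : MvPowerSeries (Fin n) K)) ^ (p ^ e - 1)} ↔
      ∀ b, coeff b f ≠ 0 →
        (∃ j ∈ A, p ^ e ≤ b j) ∨ (∀ j ∈ A, p ^ e - 1 ≤ b j) := by
  have h1 : frobeniusPower (faceIdeal K A) (p ^ e) =
      Ideal.span (mono K '' ((fun j => Finsupp.single j (p ^ e)) '' (A : Set (Fin n)))) := by
    rw [faceIdeal, frobeniusPower_span, Set.image_image, Set.image_image]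
    exact congrArg _ (Set.image_congr fun j _ => by rw [mono, ← X_pow_eq])
  have h2 : (∏ x ∈ A, (X x : MvPowerSeries (Fin n) K)) ^ (p ^ e - 1) =
      mono K (A.sum fun j => Finsupp.single j (p ^ e - 1)) := by
    rw [← prod_X_pow, ← Finset.prod_pow]
  have h3 : Ideal.span {(∏ x ∈ A, (X x : MvPowerSeries (Fin n) K)) ^ (p ^ e - 1)} =
      Ideal.span (mono K '' {A.sum fun j => Finsupp.single j (p ^ e - 1)}) := by
    rw [Set.image_singleton, h2]
  rw [h1, h3, ← Ideal.span_union, ← Set.image_union,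
    mem_span_monomials ((((A.finite_toSet).image _)).union (Set.finite_singleton _))]
  constructor
  · intro h b hb
    obtain ⟨m, hm | hm, hle⟩ := h b hb
    · obtain ⟨j, hj, rfl⟩ := hm
      exact Or.inl ⟨j, hj, Finsupp.single_le_iff.mp hle⟩
    · rw [Set.mem_singleton_iff] at hm
      subst hm
      exact Or.inr fun j hj => (sum_single_le_iff A _ b).mp hle j hj
  · intro h b hb
    rcases h b hb with ⟨j, hj, hq⟩ | hall
    · exact ⟨_, Or.inl ⟨j, hj, rfl⟩, Finsupp.single_le_iff.mpr hq⟩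
    · exact ⟨_, Or.inr rfl, (sum_single_le_iff A _ b).mpr hall⟩

end Aux

theorem colon_frobeniusPower_squarefree {K : Type*} [Field K] (p : ℕ)
    [Fact p.Prime] [CharP K p] (e : ℕ) (he : 1 ≤ e) {n : ℕ} (s : ℕ) (hs : 0 < s)
    (A : Fin s → Finset (Fin n)) (hA : ∀ i, (A i).Nonempty)
    (hmin : ∀ i j, i ≠ j → ¬ A i ⊆ A j) :
    Submodule.colon (frobeniusPower (⨅ i, faceIdeal K (A i)) (p ^ e))
        (⨅ i, faceIdeal K (A i)) =
      ⨅ i, (frobeniusPower (faceIdeal K (A i)) (p ^ e) ⊔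
        Ideal.span {(∏ x ∈ A i, (X x : MvPowerSeries (Fin n) K)) ^ (p ^ e - 1)}) := by
  classical
  have hq1 : 1 ≤ p ^ e := Nat.one_le_pow _ _ (Fact.out (p := p.Prime)).pos
  ext f
  rw [Submodule.mem_colon, Submodule.mem_iInf]
  constructor
  · intro h i
    rw [mem_rhs_iff]
    intro b hb
    by_contra hcon
    push_neg at hcon
    obtain ⟨h1, j0, hj0A, hj0⟩ := hcon
    -- choose witnesses outside A i
    have hw0 : ∀ i', i' ≠ i → ∃ j, j ∈ A i' ∧ j ∉ A i :=
      fun i' hne => Finset.not_subset.mp (hmin i' i hne)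
    let w : Fin s → Fin n := fun i' => if hne : i' ≠ i then (hw0 i' hne).choose else j0
    have hw : ∀ i', (hne : i' ≠ i) → w i' ∈ A i' ∧ w i' ∉ A i := by
      intro i' hne
      simp only [w, dif_pos hne]
      exact (hw0 i' hne).choose_spec
    set c1 : Fin n →₀ ℕ := (A i).sum fun j => Finsupp.single j (p ^ e - 1 - b j) with hc1
    set c2 : Fin n →₀ ℕ := (Finset.univ.erase i).sum fun i' => Finsupp.single (w i') 1 with hc2
    set c : Fin n →₀ ℕ := c1 + c2 with hc
    have hc2A : ∀ j ∈ A i, c2 j = 0 := by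
      intro j hjA
      rw [hc2, Finsupp.finset_sum_apply]
      refine Finset.sum_eq_zero fun i' hi' => ?_
      rw [Finsupp.single_apply, if_neg]
      intro hEq
      exact (hw i' (Finset.ne_of_mem_erase hi')).2 (hEq ▸ hjA)
    have hcA : ∀ j ∈ A i, c j = p ^ e - 1 - b j := by
      intro j hjA
      rw [hc, Finsupp.add_apply, hc2A j hjA, hc1, sum_single_apply, if_pos hjA, add_zero]
    -- the test monomial lies in the intersection ideal
    have hgI : mono K c ∈ ⨅ i', faceIdeal K (A i') := by
      rw [mem_I_iff]
      intro b' hb' i''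
      have hb'c : b' = c := eq_of_coeff_monomial_ne_zero hb'
      subst hb'c
      by_cases hii : i'' = i
      · subst hii
        refine ⟨j0, hj0A, ?_⟩
        rw [hcA j0 hj0A]
        omega
      · refine ⟨w i'', (hw i'' hii).1, ?_⟩
        have h2 : 1 ≤ c2 (w i'') := by
          rw [hc2, Finsupp.finset_sum_apply]
          have := Finset.single_le_sum
            (f := fun i' => (Finsupp.single (w i') 1 : Fin n →₀ ℕ) (w i''))
            (fun _ _ => Nat.zero_le _)
            (Finset.mem_erase.mpr ⟨hii, Finset.mem_univ i''⟩)
          simpa using this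
        rw [hc, Finsupp.add_apply]
        omega
    have hfc := h (mono K c) (Set.mem_iInter.mpr ((Submodule.mem_iInf _).mp hgI))
    rw [smul_eq_mul, mem_frobI_iff] at hfc
    have hcoeff : coeff (b + c) (f * mono K c) ≠ 0 := by
      rw [mono, coeff_add_mul_monomial, mul_one]
      exact hb
    obtain ⟨j, hjA, hj⟩ := hfc (b + c) hcoeff i
    have hbj : b j < p ^ e := h1 j hjA
    have : (b + c) j = b j + (p ^ e - 1 - b j) := by
      rw [Finsupp.add_apply, hcA j hjA]
    omega
  · intro h g hg
    rw [smul_eq_mul, mem_frobI_iff]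
    intro b hb i
    rw [coeff_mul] at hb
    obtain ⟨uv, huv, hne⟩ := Finset.exists_ne_zero_of_sum_ne_zero hb
    rw [Finset.HasAntidiagonal.mem_antidiagonal] at huv
    have hu : coeff uv.1 f ≠ 0 := left_ne_zero_of_mul hne
    have hv : coeff uv.2 g ≠ 0 := right_ne_zero_of_mul hne
    have hbj : ∀ j, b j = uv.1 j + uv.2 j := by
      intro j
      rw [← huv, Finsupp.add_apply]
    rcases (mem_rhs_iff p e (A i) f).mp (h i) uv.1 hu with ⟨j, hjA, hq⟩ | hall
    · exact ⟨j, hjA, by rw [hbj j]; omega⟩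
    · obtain ⟨j, hjA, h1v⟩ := (mem_I_iff A g).mp ((Submodule.mem_iInf _).mpr (Set.mem_iInter.mp hg)) uv.2 hv i
      have := hall j hjA
      exact ⟨j, hjA, by rw [hbj j]; omega⟩
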